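/- arXiv:2008.02002 — 4 statements merged into one kernel-verified Lean document; each statement's English description precedes it below -/
import Mathlib

section
/- Let x = Σ_{i=0}^{B_x-1} a_i 2^{i}/2^{B_x} and y = Σ_{j=0}^{B_y-1} c_j 2^{j}/2^{B_y} with a_i, c_j ∈ {+1,-1}, and let ā_i = σ(a_i), c̄_j = σ(c_j) ∈ {0,1} where σ(t)=(1-t)/2. Define x̄ ⊗ ȳ = Σ_{i,j} (ā_i ⊕ c̄_j) · 2^{i+j}. Then x·y = (1/2^{B_x+B_y}) · ((2^{B_x}-1)(2^{B_y}-1) - 2·(x̄ ⊗ ȳ)). -/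
/-!
Under σ(t) = (1 - t)/2 the XOR of two bits is σ of the product of the two signs:
σ(s) ⊕ σ(t) = (1 - s t)/2. Hence 2 (x̄ ⊗ ȳ) = Σ_{i,j} (1 - a_i c_j) 2^{i+j}, which splits into
the product of two geometric sums, (2^{B_x} - 1)(2^{B_y} - 1), minus the product of the
numerators of x and y.
-/

open Finset

lemma xor_sigma_eq_sigma_mul {K : Type*} [Field K] [NeZero (2 : K)] (s t : K) :
    (1 - s) / 2 + (1 - t) / 2 - 2 * ((1 - s) / 2) * ((1 - t) / 2) = (1 - s * t) / 2 := by
  field_simp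
  ring

lemma sum_range_two_pow {R : Type*} [Ring R] (n : ℕ) : ∑ i ∈ range n, (2 : R) ^ i = 2 ^ n - 1 := by
  simpa [show (2 : R) - 1 = 1 by norm_num] using geom_sum_mul (2 : R) n

lemma sum_sum_one_sub_mul_mul_two_pow {R : Type*} [CommRing R] (a c : ℕ → R) (m n : ℕ) :
    ∑ i ∈ range m, ∑ j ∈ range n, (1 - a i * c j) * 2 ^ (i + j)
      = (2 ^ m - 1) * (2 ^ n - 1)
        - (∑ i ∈ range m, a i * 2 ^ i) * ∑ j ∈ range n, c j * 2 ^ j := by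
  rw [← sum_range_two_pow m, ← sum_range_two_pow n, sum_mul_sum, sum_mul_sum,
    ← sum_sub_distrib]
  refine sum_congr rfl fun i _ => ?_
  rw [← sum_sub_distrib]
  exact sum_congr rfl fun j _ => by ring

theorem stmt_6_general (Bx By : ℕ)
    (a c : ℕ → ℝ) (x y : ℝ)
    (hx : x = (∑ i ∈ Finset.range Bx, a i * 2 ^ i) / 2 ^ Bx)
    (hy : y = (∑ j ∈ Finset.range By, c j * 2 ^ j) / 2 ^ By)
    (σ : ℝ → ℝ) (hσ : ∀ t, σ t = (1 - t) / 2)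
    (xor : ℝ → ℝ → ℝ) (hxor : ∀ u v, xor u v = u + v - 2 * u * v)
    (T : ℝ)
    (hT : T = ∑ i ∈ Finset.range Bx, ∑ j ∈ Finset.range By,
      xor (σ (a i)) (σ (c j)) * 2 ^ (i + j)) :
    x * y = (1 / 2 ^ (Bx + By)) * ((2 ^ Bx - 1) * (2 ^ By - 1) - 2 * T) := by
  have hT2 : 2 * T = (2 ^ Bx - 1) * (2 ^ By - 1)
      - (∑ i ∈ range Bx, a i * 2 ^ i) * ∑ j ∈ range By, c j * 2 ^ j := by
    rw [← sum_sum_one_sub_mul_mul_two_pow, hT, mul_sum]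
    refine sum_congr rfl fun i _ => ?_
    rw [mul_sum]
    refine sum_congr rfl fun j _ => ?_
    rw [hxor, hσ, hσ, xor_sigma_eq_sigma_mul]
    ring
  rw [hT2, hx, hy, pow_add]
  field_simp
  ring

/-- With σ(t) = (1-t)/2 and ⊕ the XOR on {0,1} (x ⊕ y = x + y - 2xy on reals),
and x̄ ⊗ ȳ = Σ_{i,j} (σ(a_i) ⊕ σ(c_j)) 2^{i+j}, we have
x·y = (1/2^{B_x+B_y}) ((2^{B_x}-1)(2^{B_y}-1) - 2 (x̄ ⊗ ȳ)). -/
theorem stmt_6 (Bx By : ℕ) (hBx : 0 < Bx) (hBy : 0 < By)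
    (a c : ℕ → ℝ) (ha : ∀ i < Bx, a i = 1 ∨ a i = -1)
    (hc : ∀ j < By, c j = 1 ∨ c j = -1) (x y : ℝ)
    (hx : x = (∑ i ∈ Finset.range Bx, a i * 2 ^ i) / 2 ^ Bx)
    (hy : y = (∑ j ∈ Finset.range By, c j * 2 ^ j) / 2 ^ By)
    (σ : ℝ → ℝ) (hσ : ∀ t, σ t = (1 - t) / 2)
    (xor : ℝ → ℝ → ℝ) (hxor : ∀ u v, xor u v = u + v - 2 * u * v)
    (T : ℝ)
    (hT : T = ∑ i ∈ Finset.range Bx, ∑ j ∈ Finset.range By,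
      xor (σ (a i)) (σ (c j)) * 2 ^ (i + j)) :
    x * y = (1 / 2 ^ (Bx + By)) * ((2 ^ Bx - 1) * (2 ^ By - 1) - 2 * T) :=
  stmt_6_general Bx By a c x y hx hy σ hσ xor hxor T hT
end

section
/- The quantization map f_B is monotone: for x, y ∈ (-1,1) with x ≤ y, f_B(x) ≤ f_B(y). -/
/-- Greedy sign-based binary quantization. -/
noncomputable def quant : ℕ → ℝ → ℝ
  | 0, _ => 0
  | (k + 1), x =>
      quant k x + (if 0 ≤ x - quant k x then (1 : ℝ) else -1) / 2 ^ (k + 1)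

lemma quant_key (x y : ℝ) (hxy : x ≤ y) :
    ∀ k : ℕ, quant k x ≤ quant k y ∧
      ∃ n : ℤ, quant k y - quant k x = n * (2 / 2 ^ k) := by
  intro k
  induction k with
  | zero =>
    refine ⟨le_refl 0, 0, ?_⟩
    simp [quant]
  | succ k ih =>
    obtain ⟨h1, n, hn⟩ := ih
    have h2k : (0:ℝ) < 2 ^ k := by positivity
    have hpow : (2:ℝ) ^ (k + 1) = 2 ^ k * 2 := pow_succ 2 k
    simp only [quant]
    by_cases hA : 0 ≤ x - quant k x <;> by_cases hB : 0 ≤ y - quant k y <;>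
      simp only [hA, hB, if_pos, if_neg, if_true, if_false]
    · refine ⟨by linarith, 2 * n, ?_⟩
      push_cast
      rw [hpow]
      field_simp at hn ⊢
      linarith
    · -- x side +, y side -; then quant k x < quant k y strictly
      have hlt : quant k x < quant k y := by
        push_neg at hB
        calc quant k x ≤ x := by linarith
        _ ≤ y := hxy
        _ < quant k y := by linarith
      have hn1 : (1:ℤ) ≤ n := by
        by_contra hcon
        push_neg at hcon
        have : (n:ℝ) ≤ 0 := by exact_mod_cast Int.lt_add_one_iff.mp hcon
        have : (n:ℝ) * (2 / 2 ^ k) ≤ 0 := by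
          apply mul_nonpos_of_nonpos_of_nonneg this
          positivity
        linarith
      have hn1' : (1:ℝ) ≤ (n:ℝ) := by exact_mod_cast hn1
      have hd : 2 / 2 ^ k ≤ quant k y - quant k x := by
        rw [hn]
        nlinarith [div_pos (by norm_num : (0:ℝ) < 2) h2k]
      refine ⟨?_, 2 * n - 1, ?_⟩
      · rw [hpow]
        have h12 : (2:ℝ) / (2 ^ k * 2) ≤ 2 / 2 ^ k := by
          gcongr
          nlinarith
        have e1 : (2:ℝ) / (2 ^ k * 2) = 1 / (2 ^ k * 2) + 1 / (2 ^ k * 2) := by ring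
        have e2 : (-1:ℝ) / (2 ^ k * 2) = -(1 / (2 ^ k * 2)) := by ring
        linarith
      · push_cast
        rw [hpow]
        field_simp at hn ⊢
        linarith
    · have hp : (0:ℝ) < 2 ^ (k + 1) := by positivity
      have h2 : (-1:ℝ) / 2 ^ (k + 1) ≤ 1 / 2 ^ (k + 1) := by
        rw [div_le_div_iff₀ hp hp]
        nlinarith
      refine ⟨by linarith, 2 * n + 1, ?_⟩
      push_cast
      rw [hpow]
      field_simp at hn ⊢
      linarith
    · refine ⟨by linarith, 2 * n, ?_⟩
      push_cast
      rw [hpow]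
      field_simp at hn ⊢
      linarith

/-- The quantization map f_B is monotone on (-1,1). -/
theorem stmt_11 (B : ℕ) (x y : ℝ) (hx : x ∈ Set.Ioo (-1 : ℝ) 1)
    (hy : y ∈ Set.Ioo (-1 : ℝ) 1) (hxy : x ≤ y) :
    quant B x ≤ quant B y :=
  (quant_key x y hxy B).1
end

section
/- For any x ∈ (-1,1), f_B(x) equals (2m+1)/2^B where m = ⌊x·2^{B-1}⌋ if this value lies in (-1,1); equivalently, f_B(x) is the unique odd multiple of 2^{-B} in the half-open interval of length 2^{1-B} containing x, i.e., f_B(x) - 2^{-B} ≤ x < f_B(x) + 2^{-B} when x ≥ f_B(x) - 2^{-B}. -/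
lemma two_mul_floor_two_mul_add_one (y : ℝ) :
    (2 * ⌊2 * y⌋ + 1 : ℝ) = 2 * (2 * ⌊y⌋ + 1) + if (2 * ⌊y⌋ + 1) / 2 ≤ y then 1 else -1 := by
  have hle := Int.floor_le y
  have hlt := Int.lt_floor_add_one y
  split_ifs with h
  · have : ⌊2 * y⌋ = 2 * ⌊y⌋ + 1 := by
      rw [Int.floor_eq_iff]; push_cast; constructor <;> linarith
    rw [this]; push_cast; ring
  · have : ⌊2 * y⌋ = 2 * ⌊y⌋ := by
      rw [Int.floor_eq_iff]; push_cast; constructor <;> linarith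
    rw [this]; push_cast; ring

lemma midpoint_floor_mul_bounds (x : ℝ) {c : ℝ} (hc : 0 < c) :
    (2 * ⌊x * c⌋ + 1) / (2 * c) - 1 / (2 * c) ≤ x ∧
      x < (2 * ⌊x * c⌋ + 1) / (2 * c) + 1 / (2 * c) := by
  have hle := Int.floor_le (x * c)
  have hlt := Int.lt_floor_add_one (x * c)
  rw [div_sub_div_same, ← add_div, div_le_iff₀ (by positivity),
    lt_div_iff₀ (by positivity)]
  constructor <;> linarith

theorem quant_succ_eq {x : ℝ} (hx : x ∈ Set.Ico (-1 : ℝ) 1) (k : ℕ) :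
    quant (k + 1) x = (2 * ⌊x * 2 ^ k⌋ + 1) / 2 ^ (k + 1) := by
  induction k with
  | zero =>
    obtain ⟨hx₁, hx₂⟩ := hx
    by_cases h : 0 ≤ x
    · have : ⌊x⌋ = 0 := by rw [Int.floor_eq_iff]; push_cast; constructor <;> linarith
      norm_num [quant, h, this]
    · have : ⌊x⌋ = -1 := by rw [Int.floor_eq_iff]; push_cast; constructor <;> linarith
      norm_num [quant, h, this]
  | succ k ih =>
    have hsign : 0 ≤ x - quant (k + 1) x ↔ (2 * ⌊x * 2 ^ k⌋ + 1) / 2 ≤ x * 2 ^ k := by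
      rw [ih, sub_nonneg, div_le_iff₀ (by positivity), div_le_iff₀ two_pos, pow_succ, mul_assoc]
    rw [quant, if_congr hsign rfl rfl, ih, show x * 2 ^ (k + 1) = 2 * (x * 2 ^ k) by ring,
      two_mul_floor_two_mul_add_one]
    field_simp
    ring

/-- For x ∈ (-1,1) and B > 0, f_B(x) = (2m+1)/2^B with m = ⌊x·2^{B-1}⌋, and
f_B(x) is the odd multiple of 2^{-B} whose half-open interval of length
2^{1-B} contains x:  f_B(x) - 2^{-B} ≤ x < f_B(x) + 2^{-B}. -/
theorem stmt_12 (B : ℕ) (hB : 0 < B) (x : ℝ) (hx : x ∈ Set.Ioo (-1 : ℝ) 1) :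
    quant B x = (2 * (⌊x * 2 ^ (B - 1)⌋ : ℝ) + 1) / 2 ^ B ∧
    quant B x - 1 / 2 ^ B ≤ x ∧ x < quant B x + 1 / 2 ^ B := by
  obtain ⟨k, rfl⟩ := Nat.exists_eq_add_of_lt hB
  rw [zero_add, Nat.add_sub_cancel, quant_succ_eq (Set.Ioo_subset_Ico_self hx), pow_succ']
  exact ⟨rfl, midpoint_floor_mul_bounds x (by positivity)⟩
end

section
/- Let D: documents → ℤ be the quantized distance and S: documents → ℝ the true similarity, and suppose there exists an affine relation with bounded perturbation: D(d) = C - α·S(d) + e(d) with α > 0 and |e(d)| ≤ E for all d. If d* is among the true top-K documents by similarity and m is the K-th smallest quantized distance, then D(d*) ≤ m + 2E; hence recalling all documents with D(d) ≤ m + 2E retrieves every true top-K document. -/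
/-- If the quantized distance satisfies D(d) = C - α·S(d) + e(d) with α > 0 and
|e(d)| ≤ E, d* is a true top-K document (at most K-1 documents have strictly
larger similarity), and m is the K-th smallest distance value (characterized by
fewer than K documents having D < m and at least K having D ≤ m), then
D(d*) ≤ m + 2E; so recalling all d with D(d) ≤ m + 2E retrieves every true
top-K document. -/
theorem stmt_18 {Doc : Type*} [Fintype Doc] (D : Doc → ℤ) (S : Doc → ℝ)
    (C α E : ℝ) (e : Doc → ℝ) (hα : 0 < α) (hE : 0 ≤ E)
    (hrel : ∀ d, (D d : ℝ) = C - α * S d + e d) (herr : ∀ d, |e d| ≤ E)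
    (K : ℕ) (dstar : Doc)
    (htop : (Finset.univ.filter (fun d => S dstar < S d)).card < K)
    (m : ℤ)
    (hm1 : (Finset.univ.filter (fun d => D d < m)).card < K)
    (hm2 : K ≤ (Finset.univ.filter (fun d => D d ≤ m)).card) :
    (D dstar : ℝ) ≤ (m : ℝ) + 2 * E := by
  classical
  -- Find a document d with D d ≤ m and S d ≤ S dstar
  have hne : ((Finset.univ.filter (fun d => D d ≤ m)) \
      (Finset.univ.filter (fun d => S dstar < S d))).Nonempty := by
    rw [← Finset.card_pos]
    have := Finset.le_card_sdiff (Finset.univ.filter (fun d => S dstar < S d))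
      (Finset.univ.filter (fun d => D d ≤ m))
    omega
  obtain ⟨d, hd⟩ := hne
  simp only [Finset.mem_sdiff, Finset.mem_filter, Finset.mem_univ, true_and,
    not_lt] at hd
  obtain ⟨hDd, hSd⟩ := hd
  have h1 := herr d
  have h2 := herr dstar
  rw [abs_le] at h1 h2
  have hDm : (D d : ℝ) ≤ (m : ℝ) := by exact_mod_cast hDd
  have hmul : α * S d ≤ α * S dstar := by nlinarith
  have := hrel d
  have := hrel dstar
  linarith
end
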